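/- arXiv:2106.00581 — 3 statements merged into one kernel-verified Lean document; each statement's English description precedes it below -/
import Mathlib

section
/- Fix i and let c_i < 0 (homophilous case), with δ_j > 0, c_j ≤ 1 for all j, ψ_N = (1/N)∑c_j < 1, φ_N = (1/N)∑δ_j. Then the difference δ̄_i − δ_i = (φ_N/(1−ψ_N)) c_i is strictly decreasing in δ_j for every j, strictly decreasing in c_j for every j ≠ i, and strictly increasing in c_i. -/
open Finset

/-! The adjustment is `φ c_i / (1 - ψ)`, with `φ` and `ψ` averages of the parameters, so each
partial derivative is explicit. In `δ_j` it is `c_i / (N (1 - ψ)) < 0`; in `c_j`, `j ≠ i`, it is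
`φ c_i / (N (1 - ψ)²) < 0`. In `c_i` the two effects compete and the derivative is
`φ (N - ∑_{k ≠ i} c_k) / (N (1 - ψ)²)`, which is positive because `c_k ≤ 1` bounds the sum over
the other `N - 1` agents by `N - 1`. -/

section UpdateSum

variable {ι : Type*} [Fintype ι] [DecidableEq ι]

lemma hasDerivAt_sum_update (f : ι → ℝ) (j : ι) (x : ℝ) :
    HasDerivAt (fun y => ∑ k, Function.update f j y k) 1 x := by
  simp_rw [sum_update_of_mem (mem_univ j)]
  exact (hasDerivAt_id x).add_const _

lemma hasDerivAt_div_one_sub_sum_update_div (a r : ℝ) (c : ι → ℝ) (j : ι)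
    (hc : 1 - (∑ k, c k) / r ≠ 0) :
    HasDerivAt (fun x => a / (1 - (∑ k, Function.update c j x k) / r))
      (a / r / (1 - (∑ k, c k) / r) ^ 2) (c j) := by
  have hden := ((hasDerivAt_sum_update c j (c j)).div_const r).const_sub 1
  exact ((hasDerivAt_const (c j) a).div hden (by rwa [Function.update_eq_self])).congr_deriv
    (by rw [Function.update_eq_self]; ring)

end UpdateSum

lemma sum_sub_lt_card_of_le_one {ι : Type*} [Fintype ι] (c : ι → ℝ) (hc : ∀ j, c j ≤ 1)
    (i : ι) : ∑ k, c k - c i < Fintype.card ι := by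
  classical
  have hcard : ((univ.erase i).card : ℝ) = Fintype.card ι - 1 := by
    rw [card_erase_of_mem (mem_univ i), card_univ,
      Nat.cast_sub (Fintype.card_pos_iff.mpr ⟨i⟩), Nat.cast_one]
  calc ∑ k, c k - c i = ∑ k ∈ univ.erase i, c k := (sum_erase_eq_sub (mem_univ i)).symm
    _ ≤ (univ.erase i).card • (1 : ℝ) := sum_le_card_nsmul _ _ 1 fun k _ => hc k
    _ < Fintype.card ι := by rw [nsmul_one, hcard]; linarith

theorem homophilous_adjustment_monotonicity_general (N : ℕ) (δ c : Fin N → ℝ)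
    (hδ : ∀ j, 0 < δ j) (hc : ∀ j, c j ≤ 1)
    (φ ψ : ℝ) (hφ : φ = (∑ j, δ j) / N) (hψ : ψ = (∑ j, c j) / N) (hψ1 : ψ < 1)
    (i : Fin N) (hci : c i < 0) :
    (∀ j : Fin N,
      deriv (fun x : ℝ => ((∑ k, Function.update δ j x k) / N) / (1 - ψ) * c i) (δ j) < 0) ∧
    (∀ j : Fin N, j ≠ i →
      deriv (fun x : ℝ => φ / (1 - (∑ k, Function.update c j x k) / N) * c i) (c j) < 0) ∧
    (0 < deriv (fun x : ℝ => φ / (1 - (∑ k, Function.update c i x k) / N) * x) (c i)) := by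
  have hN : (0 : ℝ) < N := Nat.cast_pos.mpr i.pos
  have h1ψ : 0 < 1 - ψ := by linarith
  have hφ0 : 0 < φ := hφ ▸ div_pos (sum_pos (fun j _ => hδ j) ⟨i, mem_univ i⟩) hN
  have hψ_deriv (j : Fin N) : HasDerivAt (fun x => φ / (1 - (∑ k, Function.update c j x k) / N))
      (φ / N / (1 - ψ) ^ 2) (c j) := by
    rw [hψ]; exact hasDerivAt_div_one_sub_sum_update_div φ N c j (hψ ▸ h1ψ.ne')
  refine ⟨fun j => ?_, fun j _ => ?_, ?_⟩
  · rw [((((hasDerivAt_sum_update δ j _).div_const _).div_const _).mul_const _).deriv]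
    exact mul_neg_of_pos_of_neg (by positivity) hci
  · rw [((hψ_deriv j).mul_const _).deriv]
    exact mul_neg_of_pos_of_neg (by positivity) hci
  · have hφx : HasDerivAt (fun x => φ / (1 - (∑ k, Function.update c i x k) / N) * x)
        (φ / N / (1 - ψ) ^ 2 * c i + φ / (1 - (∑ k, c k) / N) * 1) (c i) := by
      simpa only [Pi.mul_def, Function.update_eq_self] using (hψ_deriv i).mul (hasDerivAt_id' _)
    rw [hφx.deriv, ← hψ]
    have hother : 0 < N * (1 - ψ) + c i := by
      have := sum_sub_lt_card_of_le_one c hc i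
      rw [Fintype.card_fin] at this
      rw [hψ, mul_sub, mul_div_cancel₀ _ hN.ne']
      linarith
    calc (0 : ℝ) < φ / (N * (1 - ψ) ^ 2) * (N * (1 - ψ) + c i) := by positivity
      _ = _ := by field_simp; ring

/-- Monotonicity (in the sense of partial derivatives) of the homophilous
adjustment `δ̄_i − δ_i = (φ_N/(1−ψ_N)) c_i` with respect to the parameters
`δ_j` (all `j`), `c_j` (`j ≠ i`) and `c_i`. -/
theorem homophilous_adjustment_monotonicity (N : ℕ) (hN : 1 ≤ N) (δ c : Fin N → ℝ)
    (hδ : ∀ j, 0 < δ j) (hc : ∀ j, c j ≤ 1)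
    (φ ψ : ℝ) (hφ : φ = (∑ j, δ j) / N) (hψ : ψ = (∑ j, c j) / N) (hψ1 : ψ < 1)
    (i : Fin N) (hci : c i < 0) :
    (∀ j : Fin N,
      deriv (fun x : ℝ => ((∑ k, Function.update δ j x k) / N) / (1 - ψ) * c i) (δ j) < 0) ∧
    (∀ j : Fin N, j ≠ i →
      deriv (fun x : ℝ => φ / (1 - (∑ k, Function.update c j x k) / N) * c i) (c j) < 0) ∧
    (0 < deriv (fun x : ℝ => φ / (1 - (∑ k, Function.update c i x k) / N) * x) (c i)) :=
  homophilous_adjustment_monotonicity_general N δ c hδ hc φ ψ hφ hψ hψ1 i hci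
end

section
/- Let Δ = 1 + β²μ² + 2ρμβ with μ > 0, β > 0, ρ ∈ (−1,1), and suppose Δ > 0 and ρ² < 1. Define p(t) = ((1+ρμβ−√Δ)/((1−ρ²)β²)) · (1 − e^{−√Δ(T−t)}) / (1 − ((1+ρμβ−√Δ)/(1+ρμβ+√Δ)) e^{−√Δ(T−t)}) for t ∈ [0,T]. Then p is differentiable on [0,T], satisfies the Riccati ODE ṗ(t) − (1/2)(μ + ρβ p(t))² − p(t) + (1/2)β² p(t)² = 0, and p(T) = 0. -/
/-!
With `w = (1 - ρ²) β²` and `a = 1 + ρμβ`, the Riccati equation reads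
`ṗ = -(w/2) p² + a p + μ²/2 = -(w/2) (p - r₁) (p - r₂)`, whose roots `r₁,₂ = (a ∓ √Δ) / w` are real
because `Δ = a² + μ² w`. A constant-coefficient Riccati equation `q̇ = k (q - r₁) (q - r₂)` with
`q(T) = 0` is solved by `r₁ r₂ (1 - E) / (r₂ - r₁ E)`, `E = exp (k (r₂ - r₁) (T - t))`, and the
given `p` is this formula after clearing denominators. As `r₁ < 0 < r₂`, the denominator stays positive.
-/

open Real

noncomputable def riccatiSolution (k r₁ r₂ T t : ℝ) : ℝ :=
  r₁ * r₂ * (1 - exp (k * (r₂ - r₁) * (T - t))) / (r₂ - r₁ * exp (k * (r₂ - r₁) * (T - t)))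

section Riccati

variable (k r₁ r₂ T : ℝ)

theorem riccatiSolution_self : riccatiSolution k r₁ r₂ T T = 0 := by
  simp [riccatiSolution]

theorem hasDerivAt_riccatiSolution {t : ℝ}
    (ht : r₂ - r₁ * exp (k * (r₂ - r₁) * (T - t)) ≠ 0) :
    HasDerivAt (riccatiSolution k r₁ r₂ T)
      (k * (riccatiSolution k r₁ r₂ T t - r₁) * (riccatiSolution k r₁ r₂ T t - r₂)) t := by
  set c := k * (r₂ - r₁) with hc
  have hE : HasDerivAt (fun u => exp (c * (T - u))) (-c * exp (c * (T - t))) t := by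
    simpa [mul_comm] using (((hasDerivAt_id t).const_sub T).const_mul c).exp
  refine (((hE.const_sub 1).const_mul (r₁ * r₂)).div
    ((hE.const_mul r₁).const_sub r₂) ht).congr_deriv ?_
  simp only [riccatiSolution, ← hc]
  field_simp
  ring

theorem riccatiSolution_denom_pos {r₁ r₂ : ℝ} (h₁ : r₁ ≤ 0) (h₂ : 0 < r₂) (x : ℝ) :
    0 < r₂ - r₁ * exp x := by
  nlinarith [exp_pos x]

end Riccati

theorem riccati_explicit_solution_general (μ β ρ T : ℝ) (hμ : 0 < μ) (hβ : 0 < β)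
    (Δ : ℝ) (hΔdef : Δ = 1 + β ^ 2 * μ ^ 2 + 2 * ρ * μ * β) (hΔ : 0 < Δ)
    (hρsq : ρ ^ 2 < 1)
    (p : ℝ → ℝ)
    (hp : ∀ t : ℝ, p t =
      ((1 + ρ * μ * β - Real.sqrt Δ) / ((1 - ρ ^ 2) * β ^ 2)) *
        (1 - Real.exp (-Real.sqrt Δ * (T - t))) /
        (1 - ((1 + ρ * μ * β - Real.sqrt Δ) / (1 + ρ * μ * β + Real.sqrt Δ)) *
          Real.exp (-Real.sqrt Δ * (T - t)))) :
    (∀ t ∈ Set.Icc (0 : ℝ) T, DifferentiableAt ℝ p t) ∧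
    (∀ t ∈ Set.Icc (0 : ℝ) T,
      deriv p t - (1 / 2) * (μ + ρ * β * p t) ^ 2 - p t + (1 / 2) * β ^ 2 * (p t) ^ 2 = 0) ∧
    p T = 0 := by
  set s := √Δ
  set a := 1 + ρ * μ * β
  set w := (1 - ρ ^ 2) * β ^ 2
  have hw : 0 < w := mul_pos (by linarith) (by positivity)
  have hs : s ^ 2 = a ^ 2 + μ ^ 2 * w := by
    rw [Real.sq_sqrt hΔ.le, hΔdef]; ring
  obtain ⟨hB, hA⟩ : -s < a ∧ a < s :=
    abs_lt_of_sq_lt_sq' (by nlinarith [mul_pos (pow_pos hμ 2) hw]) (Real.sqrt_nonneg _)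
  have hpq : p = riccatiSolution (-w / 2) ((a - s) / w) ((a + s) / w) T := by
    have hrate : -w / 2 * ((a + s) / w - (a - s) / w) = -s := by field_simp; ring
    have hB' : a + s ≠ 0 := by linarith
    funext t
    rw [hp, riccatiSolution, hrate]
    field_simp
  have hderiv (t : ℝ) : HasDerivAt p (-w / 2 * (p t - (a - s) / w) * (p t - (a + s) / w)) t := by
    rw [hpq]
    exact hasDerivAt_riccatiSolution _ _ _ _ (riccatiSolution_denom_pos
      (div_nonpos_of_nonpos_of_nonneg (by linarith) hw.le) (div_pos (by linarith) hw) _).ne'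
  refine ⟨fun t _ => (hderiv t).differentiableAt, fun t _ => ?_, by rw [hpq, riccatiSolution_self]⟩
  rw [(hderiv t).deriv]
  field_simp
  linear_combination hs

theorem riccati_explicit_solution (μ β ρ T : ℝ) (hμ : 0 < μ) (hβ : 0 < β)
    (hρ1 : -1 < ρ) (hρ2 : ρ < 1) (hT : 0 ≤ T)
    (Δ : ℝ) (hΔdef : Δ = 1 + β ^ 2 * μ ^ 2 + 2 * ρ * μ * β) (hΔ : 0 < Δ)
    (hρsq : ρ ^ 2 < 1)
    (p : ℝ → ℝ)
    (hp : ∀ t : ℝ, p t =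
      ((1 + ρ * μ * β - Real.sqrt Δ) / ((1 - ρ ^ 2) * β ^ 2)) *
        (1 - Real.exp (-Real.sqrt Δ * (T - t))) /
        (1 - ((1 + ρ * μ * β - Real.sqrt Δ) / (1 + ρ * μ * β + Real.sqrt Δ)) *
          Real.exp (-Real.sqrt Δ * (T - t)))) :
    (∀ t ∈ Set.Icc (0 : ℝ) T, DifferentiableAt ℝ p t) ∧
    (∀ t ∈ Set.Icc (0 : ℝ) T,
      deriv p t - (1 / 2) * (μ + ρ * β * p t) ^ 2 - p t + (1 / 2) * β ^ 2 * (p t) ^ 2 = 0) ∧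
    p T = 0 :=
  riccati_explicit_solution_general μ β ρ T hμ hβ Δ hΔdef hΔ hρsq p hp
end

section
/- Let ζ: [0,T] × ℝ → ℝ be a C^{1,2} function with ζ > 0, and define f(t,y) = (1/(1−ρ²)) ln ζ(t,y) for ρ ∈ (−1,1). If ζ satisfies ζ_t + (1/2)a²(t,y)ζ_{yy} + (b(t,y) − ρλ(t,y)a(t,y))ζ_y = (1/2)(1−ρ²)λ²(t,y)ζ with ζ(T,y) = 1, then f satisfies f_t + (1/2)a²(t,y)f_{yy} + (b(t,y) − ρλ(t,y)a(t,y))f_y + (1/2)(1−ρ²)a²(t,y)f_y² = (1/2)λ²(t,y) with f(T,y) = 0. -/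
open Real

theorem deriv_deriv_log_comp {g : ℝ → ℝ} (hg : ContDiff ℝ 2 g) (hg0 : ∀ x, g x ≠ 0) (x : ℝ) :
    deriv (deriv fun x => log (g x)) x = (deriv (deriv g) x * g x - deriv g x ^ 2) / g x ^ 2 := by
  have hg1 : Differentiable ℝ g := hg.differentiable (by norm_num)
  have hg2 : Differentiable ℝ (deriv g) := (ContDiff.deriv' (n := 1) hg).differentiable one_ne_zero
  have hlog : deriv (fun x => log (g x)) = fun x => deriv g x / g x :=
    funext fun x => deriv.log (hg1 x) (hg0 x)
  rw [hlog, deriv_fun_div (hg2 x) (hg1 x) (hg0 x)]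
  ring

/-- The linear equation divided by `k z`: for `f = log z / k` one has `zyy / z = k f_yy + (k f_y)²`,
and the square is the quadratic term of the semilinear equation. -/
theorem hopfCole_identity {k z zt zy zyy a β lam : ℝ} (hk : k ≠ 0) (hz : z ≠ 0)
    (hlin : zt + 1 / 2 * a ^ 2 * zyy + β * zy = 1 / 2 * k * lam ^ 2 * z) :
    1 / k * (zt / z) + 1 / 2 * a ^ 2 * (1 / k * ((zyy * z - zy ^ 2) / z ^ 2))
      + β * (1 / k * (zy / z)) + 1 / 2 * k * a ^ 2 * (1 / k * (zy / z)) ^ 2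
      = 1 / 2 * lam ^ 2 := by
  field_simp
  linear_combination 2 * z * hlin

/-- The distortion (Hopf–Cole type) transformation: if `ζ > 0` solves the linear
PDE `ζ_t + ½a²ζ_yy + (b − ρλa)ζ_y = ½(1−ρ²)λ²ζ` with `ζ(T,·) = 1`, then
`f = (1/(1−ρ²)) ln ζ` solves the semilinear PDE
`f_t + ½a²f_yy + (b − ρλa)f_y + ½(1−ρ²)a²f_y² = ½λ²` with `f(T,·) = 0`. -/
theorem distortion_transformation (ρ T : ℝ) (hρ1 : -1 < ρ) (hρ2 : ρ < 1)
    (a b lam : ℝ → ℝ → ℝ) (ζ : ℝ → ℝ → ℝ)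
    (hζpos : ∀ t y, 0 < ζ t y)
    (hζt : ∀ y, Differentiable ℝ (fun τ => ζ τ y))
    (hζy : ∀ t, ContDiff ℝ 2 (fun y => ζ t y))
    (hPDE : ∀ t y,
      deriv (fun τ => ζ τ y) t
        + (1 / 2) * (a t y) ^ 2 * deriv (deriv (fun y' => ζ t y')) y
        + (b t y - ρ * lam t y * a t y) * deriv (fun y' => ζ t y') y
      = (1 / 2) * (1 - ρ ^ 2) * (lam t y) ^ 2 * ζ t y)
    (hterm : ∀ y, ζ T y = 1)
    (f : ℝ → ℝ → ℝ)
    (hf : ∀ t y, f t y = (1 / (1 - ρ ^ 2)) * Real.log (ζ t y)) :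
    (∀ t y,
      deriv (fun τ => f τ y) t
        + (1 / 2) * (a t y) ^ 2 * deriv (deriv (fun y' => f t y')) y
        + (b t y - ρ * lam t y * a t y) * deriv (fun y' => f t y') y
        + (1 / 2) * (1 - ρ ^ 2) * (a t y) ^ 2 * (deriv (fun y' => f t y') y) ^ 2
      = (1 / 2) * (lam t y) ^ 2) ∧
    (∀ y, f T y = 0) := by
  obtain rfl : f = fun t y => 1 / (1 - ρ ^ 2) * log (ζ t y) := funext₂ hf
  have hk : 1 - ρ ^ 2 ≠ 0 := by nlinarith
  have hζ0 : ∀ t y, ζ t y ≠ 0 := fun t y => (hζpos t y).ne'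
  refine ⟨fun t y => ?_, fun y => by simp [hterm]⟩
  simp only [deriv_const_mul_field, deriv_const_mul_field']
  rw [deriv.log (hζt y t) (hζ0 t y), deriv_deriv_log_comp (hζy t) (hζ0 t),
    deriv.log ((hζy t).differentiable (by norm_num) y) (hζ0 t y)]
  exact hopfCole_identity hk (hζ0 t y) (hPDE t y)
end
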